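/- For all real numbers a, b, the normalized mode sum with the square-root weight converges: lim_{N→∞} (2/(πN)) Σ_{l=1}^{N−1} (1 − (l/N)²)^{−1/2} sin(a l/N) sin(b l/N) = (1/π) ∫₀¹ (cos((a−b)s) − cos((a+b)s)) (1 − s²)^{−1/2} ds. (This limit equals (1/2)[J₀(a−b) − J₀(a+b)] in terms of the Bessel function of the first kind of order 0.) -/

import Mathlib

/-!
By `cos((a-b)s) - cos((a+b)s) = 2 sin(as) sin(bs)` and `f 0 = 0`, the normalized sum is `1/π`
times the left Riemann sum `N⁻¹ Σ_{l<N} f(l/N)` of the integrand `f`. That Riemann sum is the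
integral over `[0,1]` of the step function `s ↦ f(⌊sN⌋/N)`, which converges to `f` on `(0,1)`.
Since `⌊sN⌋/N ≤ s` and `|f|` is bounded by `2/√(1-s²)`, which is increasing on `[0,1)` and
integrable (it is `2 arcsin'`), dominated convergence applies despite the singularity at `s = 1`.
-/
open Real Filter intervalIntegral MeasureTheory Set
open scoped Interval

section RiemannSum

variable {E : Type*} [NormedAddCommGroup E] [NormedSpace ℝ E] [CompleteSpace E]

lemma nat_floor_mul_eq_of_mem_Ico {N : ℕ} (hN : 0 < N) {k : ℕ} {s : ℝ}
    (hs : s ∈ Ico ((k : ℝ) / N) (((k + 1 : ℕ) : ℝ) / N)) : ⌊s * N⌋₊ = k := by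
  have hN' : (0 : ℝ) < N := Nat.cast_pos.2 hN
  obtain ⟨hks, hsk⟩ := hs
  rw [div_le_iff₀ hN'] at hks
  rw [lt_div_iff₀ hN'] at hsk
  rw [Nat.floor_eq_iff (le_trans (by positivity) hks)]
  exact ⟨hks, by exact_mod_cast hsk⟩

lemma nat_floor_mul_div_le (N : ℕ) {s : ℝ} (hs : 0 ≤ s) : (⌊s * N⌋₊ : ℝ) / N ≤ s := by
  rcases N.eq_zero_or_pos with rfl | hN
  · simpa using hs
  · rw [div_le_iff₀ (Nat.cast_pos.2 hN)]
    exact Nat.floor_le (by positivity)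

theorem integral_comp_nat_floor_mul_div (f : ℝ → E) {N : ℕ} (hN : 0 < N) :
    ∫ s in (0 : ℝ)..1, f ((⌊s * N⌋₊ : ℝ) / N) = ∑ l ∈ Finset.range N, (N : ℝ)⁻¹ • f (l / N) := by
  have hN' : (0 : ℝ) < N := Nat.cast_pos.2 hN
  have hle : ∀ k : ℕ, (k : ℝ) / N ≤ ((k + 1 : ℕ) : ℝ) / N := fun k => by gcongr; simp
  have hstep : ∀ k : ℕ, EqOn (fun s : ℝ => f ((⌊s * N⌋₊ : ℝ) / N)) (fun _ => f (k / N))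
      (Ioo ((k : ℝ) / N) (((k + 1 : ℕ) : ℝ) / N)) := fun k (s : ℝ) hs => by
    simp only [nat_floor_mul_eq_of_mem_Ico hN (Ioo_subset_Ico_self hs)]
  have hsum := sum_integral_adjacent_intervals (μ := volume) (a := fun k : ℕ => (k : ℝ) / N)
    (n := N) (f := fun s : ℝ => f ((⌊s * N⌋₊ : ℝ) / N)) fun k _ =>
      intervalIntegrable_const.congr_uIoo (by rw [uIoo_of_le (hle k)]; exact (hstep k).symm)
  simp only [Nat.cast_zero, zero_div, div_self hN'.ne'] at hsum
  rw [← hsum]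
  refine Finset.sum_congr rfl fun k _ => ?_
  rw [integral_congr_Ioo_of_le (hle k) (hstep k), intervalIntegral.integral_const]
  congr 1
  push_cast
  ring

theorem tendsto_riemannSum_of_monotoneOn_bound {f : ℝ → E} {g : ℝ → ℝ}
    (hf : ContinuousOn f (Ioo 0 1)) (hg : IntervalIntegrable g volume 0 1)
    (hg_mono : MonotoneOn g (Ico 0 1)) (hfg : ∀ t ∈ Ico (0 : ℝ) 1, ‖f t‖ ≤ g t) :
    Tendsto (fun N : ℕ => ∑ l ∈ Finset.range N, (N : ℝ)⁻¹ • f (l / N)) atTop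
      (nhds (∫ s in (0 : ℝ)..1, f s)) := by
  have ae_of_Ioo : ∀ {P : ℝ → Prop}, (∀ x ∈ Ioo (0 : ℝ) 1, P x) →
      ∀ᵐ x ∂volume, x ∈ Ι (0 : ℝ) 1 → P x := fun h => by
    filter_upwards [volume.ae_ne 1] with x hx1 hx
    rw [uIoc_of_le zero_le_one] at hx
    exact h x ⟨hx.1, hx.2.lt_of_ne hx1⟩
  have hF_meas (N : ℕ) : AEStronglyMeasurable (fun s : ℝ => f ((⌊s * N⌋₊ : ℝ) / N))
      (volume.restrict (Ι 0 1)) :=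
    (StronglyMeasurable.of_discrete (f := fun n : ℕ => f (n / N))).comp_measurable
      (measurable_id.mul_const _).nat_floor |>.aestronglyMeasurable
  have hF_bound (N : ℕ) : ∀ᵐ x ∂volume, x ∈ Ι (0 : ℝ) 1 →
      ‖f ((⌊x * N⌋₊ : ℝ) / N)‖ ≤ g x := ae_of_Ioo fun x hx => by
    have hle := nat_floor_mul_div_le N hx.1.le
    have hmem : (⌊x * N⌋₊ : ℝ) / N ∈ Ico (0 : ℝ) 1 := ⟨by positivity, hle.trans_lt hx.2⟩
    exact (hfg _ hmem).trans (hg_mono hmem (Ioo_subset_Ico_self hx) hle)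
  have hF_lim : ∀ᵐ x ∂volume, x ∈ Ι (0 : ℝ) 1 →
      Tendsto (fun N : ℕ => f ((⌊x * N⌋₊ : ℝ) / N)) atTop (nhds (f x)) := ae_of_Ioo fun x hx =>
    (hf.continuousAt (Ioo_mem_nhds hx.1 hx.2)).tendsto.comp
      ((tendsto_nat_floor_mul_div_atTop hx.1.le).comp tendsto_natCast_atTop_atTop)
  refine (intervalIntegral.tendsto_integral_filter_of_dominated_convergence g
    (.of_forall hF_meas) (.of_forall hF_bound) hg hF_lim).congr' ?_
  filter_upwards [eventually_gt_atTop 0] with N hN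
  exact integral_comp_nat_floor_mul_div f hN

end RiemannSum

lemma intervalIntegrable_div_sqrt_one_sub_sq (c : ℝ) :
    IntervalIntegrable (fun s : ℝ => c / √(1 - s ^ 2)) volume 0 1 := by
  have h : IntervalIntegrable (fun s : ℝ => 1 / √(1 - s ^ 2)) volume 0 1 :=
    intervalIntegrable_deriv_of_nonneg continuous_arcsin.continuousOn
      (fun x hx => by
        rw [min_eq_left zero_le_one, max_eq_right zero_le_one] at hx
        exact hasDerivAt_arcsin (by linarith [hx.1]) hx.2.ne)
      fun x _ => by positivity
  simpa only [mul_one_div] using h.const_mul c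

lemma monotoneOn_div_sqrt_one_sub_sq {c : ℝ} (hc : 0 ≤ c) :
    MonotoneOn (fun s : ℝ => c / √(1 - s ^ 2)) (Ico 0 1) := fun t ht s hs hts => by
  have : 0 < 1 - s ^ 2 := by nlinarith [hs.1, hs.2]
  dsimp only
  gcongr
  exact ht.1

lemma abs_cos_sub_cos_div_le (x y r : ℝ) : |(cos x - cos y) / r| ≤ 2 / |r| := by
  rw [abs_div]
  gcongr
  calc |cos x - cos y| ≤ |cos x| + |cos y| := abs_sub _ _
    _ ≤ 1 + 1 := add_le_add (abs_cos_le_one x) (abs_cos_le_one y)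
    _ = 2 := one_add_one_eq_two

lemma cos_sub_cos_mul (a b s : ℝ) :
    cos ((a - b) * s) - cos ((a + b) * s) = 2 * sin (a * s) * sin (b * s) := by
  rw [sub_mul, add_mul, cos_sub, cos_add]
  ring

/-- large-`N` limit of the normalized mode sum with the square-root
weight, `(2/(πN)) Σ_{l=1}^{N−1} (1 − (l/N)²)^{−1/2} sin(al/N) sin(bl/N) →
(1/π) ∫₀¹ (cos((a−b)s) − cos((a+b)s)) (1 − s²)^{−1/2} ds`. -/
theorem stmt_11 (a b : ℝ) :
    Tendsto (fun N : ℕ =>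
        (2 / (Real.pi * N)) * ∑ l ∈ Finset.Ico 1 N,
          (1 / Real.sqrt (1 - ((l : ℝ) / N) ^ 2)) *
            Real.sin (a * l / N) * Real.sin (b * l / N))
      atTop
      (nhds ((1 / Real.pi) * ∫ s in (0 : ℝ)..1,
        (Real.cos ((a - b) * s) - Real.cos ((a + b) * s)) / Real.sqrt (1 - s ^ 2))) := by
  set f : ℝ → ℝ := fun s => (cos ((a - b) * s) - cos ((a + b) * s)) / √(1 - s ^ 2)
  have hf_cont : ContinuousOn f (Ioo 0 1) := ContinuousOn.div (by fun_prop) (by fun_prop)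
    fun s hs => (sqrt_pos.2 (by nlinarith [hs.1, hs.2])).ne'
  have hf_bound : ∀ t ∈ Ico (0 : ℝ) 1, ‖f t‖ ≤ 2 / √(1 - t ^ 2) := fun t _ => by
    simpa only [f, Real.norm_eq_abs, abs_of_nonneg (sqrt_nonneg _)] using
      abs_cos_sub_cos_div_le _ _ (√(1 - t ^ 2))
  refine ((tendsto_riemannSum_of_monotoneOn_bound hf_cont
    (intervalIntegrable_div_sqrt_one_sub_sq 2) (monotoneOn_div_sqrt_one_sub_sq zero_le_two)
    hf_bound).const_mul (1 / π)).congr' ?_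
  filter_upwards [eventually_gt_atTop 0] with N hN
  rw [Finset.range_eq_Ico, Finset.sum_eq_sum_Ico_succ_bot hN]
  simp only [f, Nat.cast_zero, zero_div, mul_zero, sub_self, smul_zero, zero_add, Finset.mul_sum]
  refine Finset.sum_congr rfl fun l _ => ?_
  rw [cos_sub_cos_mul, smul_eq_mul, mul_div_assoc a, mul_div_assoc b]
  ring
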